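/- For every multiple-access channel W on finite alphabets, the capacity region equals the sum-capacity region: C(W) = C_sum(W). -/

import Mathlib

/-!
A joint decoder `d` yields two individual decoders, its marginals, and `2 d(i₁, i₂)` is at most
the sum of the marginals at `i₁` and `i₂`; hence `S ≤ S_sum`. Conversely, individual decoders
`d₁, d₂` run independently form a joint decoder, and `d₁ + d₂ ≤ d₁ d₂ + 1` on `[0, 1]`; hence
`2 S_sum - 1 ≤ S`. Since also `S_sum ≤ 1`, at every blocklength `S` lies between `2 S_sum - 1` and
`S_sum`, so `S → 1` iff `S_sum → 1`: the achievable and the sum-achievable rate pairs coincide.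
-/

open Finset Filter Topology

section Defs

variable {X1 X2 Y : Type*}

/-- The `n`-fold memoryless extension `W^{⊗n}` of a multiple-access channel `W`. -/
def macPow (n : ℕ) (W : X1 → X2 → Y → ℝ) :
    (Fin n → X1) → (Fin n → X2) → (Fin n → Y) → ℝ :=
  fun x1 x2 y => ∏ i, W (x1 i) (x2 i) (y i)

/-- `S(W,k1,k2)`: maximum joint success probability over classical (unassisted)
stochastic encoders and decoder. -/
noncomputable def S [Fintype X1] [Fintype X2] [Fintype Y]
    (W : X1 → X2 → Y → ℝ) (k1 k2 : ℕ) : ℝ :=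
  sSup {s : ℝ | ∃ (e1 : Fin k1 → X1 → ℝ) (e2 : Fin k2 → X2 → ℝ)
      (d : Y → Fin k1 → Fin k2 → ℝ),
    (∀ i1 x1, 0 ≤ e1 i1 x1) ∧ (∀ i1, ∑ x1, e1 i1 x1 = 1) ∧
    (∀ i2 x2, 0 ≤ e2 i2 x2) ∧ (∀ i2, ∑ x2, e2 i2 x2 = 1) ∧
    (∀ y j1 j2, 0 ≤ d y j1 j2) ∧ (∀ y, ∑ j1, ∑ j2, d y j1 j2 = 1) ∧
    s = (1 / ((k1 : ℝ) * (k2 : ℝ))) * ∑ i1, ∑ i2, ∑ x1, ∑ x2, ∑ y,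
      W x1 x2 y * e1 i1 x1 * e2 i2 x2 * d y i1 i2}

/-- `S_sum(W,k1,k2)`: maximum sum (averaged individual) success probability over
classical stochastic encoders and a pair of decoders. -/
noncomputable def Ssum [Fintype X1] [Fintype X2] [Fintype Y]
    (W : X1 → X2 → Y → ℝ) (k1 k2 : ℕ) : ℝ :=
  sSup {s : ℝ | ∃ (e1 : Fin k1 → X1 → ℝ) (e2 : Fin k2 → X2 → ℝ)
      (d1 : Y → Fin k1 → ℝ) (d2 : Y → Fin k2 → ℝ),
    (∀ i1 x1, 0 ≤ e1 i1 x1) ∧ (∀ i1, ∑ x1, e1 i1 x1 = 1) ∧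
    (∀ i2 x2, 0 ≤ e2 i2 x2) ∧ (∀ i2, ∑ x2, e2 i2 x2 = 1) ∧
    (∀ y j1, 0 ≤ d1 y j1) ∧ (∀ y, ∑ j1, d1 y j1 = 1) ∧
    (∀ y j2, 0 ≤ d2 y j2) ∧ (∀ y, ∑ j2, d2 y j2 = 1) ∧
    s = (1 / (2 * (k1 : ℝ) * (k2 : ℝ))) * ∑ i1, ∑ i2, ∑ x1, ∑ x2, ∑ y,
      W x1 x2 y * e1 i1 x1 * e2 i2 x2 * (d1 y i1 + d2 y i2)}

/-- `⌈2^{R n}⌉`, the number of messages at rate `R` for blocklength `n`. -/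
noncomputable def nMsg (R : ℝ) (n : ℕ) : ℕ := ⌈(2 : ℝ) ^ (R * (n : ℝ))⌉₊

/-- The capacity region `C(W)`: closure of the set of achievable rate pairs. -/
noncomputable def capacityRegion [Fintype X1] [Fintype X2] [Fintype Y]
    (W : X1 → X2 → Y → ℝ) : Set (ℝ × ℝ) :=
  closure {p : ℝ × ℝ |
    Tendsto (fun n : ℕ => S (macPow n W) (nMsg p.1 n) (nMsg p.2 n)) atTop (𝓝 1)}

/-- The sum-capacity region `C_sum(W)`: closure of the set of sum-achievable rate pairs. -/
noncomputable def sumCapacityRegion [Fintype X1] [Fintype X2] [Fintype Y]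
    (W : X1 → X2 → Y → ℝ) : Set (ℝ × ℝ) :=
  closure {p : ℝ × ℝ |
    Tendsto (fun n : ℕ => Ssum (macPow n W) (nMsg p.1 n) (nMsg p.2 n)) atTop (𝓝 1)}

end Defs

section IsMAC

variable {X1 X2 Y : Type*} [Fintype Y] {W : X1 → X2 → Y → ℝ}

structure IsMAC (W : X1 → X2 → Y → ℝ) : Prop where
  nonneg : ∀ x1 x2 y, 0 ≤ W x1 x2 y
  sum_eq_one : ∀ x1 x2, ∑ y, W x1 x2 y = 1

lemma IsMAC.macPow (hW : IsMAC W) (n : ℕ) : IsMAC (macPow n W) where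
  nonneg _ _ _ := prod_nonneg fun _ _ => hW.nonneg _ _ _
  sum_eq_one x1 x2 := by
    change ∑ y : Fin n → Y, ∏ i, W (x1 i) (x2 i) (y i) = 1
    simp only [← Fintype.prod_sum, hW.sum_eq_one, prod_const_one]

end IsMAC

section SuccessSum

variable {X1 X2 Y : Type*} [Fintype X1] [Fintype X2] [Fintype Y] {k1 k2 : ℕ}
  (W : X1 → X2 → Y → ℝ) (e1 : Fin k1 → X1 → ℝ) (e2 : Fin k2 → X2 → ℝ)

def successSum (f : Y → Fin k1 → Fin k2 → ℝ) : ℝ :=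
  ∑ i1, ∑ i2, ∑ x1, ∑ x2, ∑ y, W x1 x2 y * e1 i1 x1 * e2 i2 x2 * f y i1 i2

variable {W e1 e2}

lemma successSum_mono (hW : ∀ x1 x2 y, 0 ≤ W x1 x2 y) (he1 : ∀ i1 x1, 0 ≤ e1 i1 x1)
    (he2 : ∀ i2 x2, 0 ≤ e2 i2 x2) {f g : Y → Fin k1 → Fin k2 → ℝ}
    (hfg : ∀ y i1 i2, f y i1 i2 ≤ g y i1 i2) :
    successSum W e1 e2 f ≤ successSum W e1 e2 g := by
  unfold successSum
  gcongr with i1 _ i2 _ x1 _ x2 _ y _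
  · have := hW x1 x2 y
    have := he1 i1 x1
    have := he2 i2 x2
    positivity
  · exact hfg y i1 i2

lemma successSum_zero : successSum W e1 e2 (fun _ _ _ => 0) = 0 := by
  simp [successSum]

lemma successSum_add (f g : Y → Fin k1 → Fin k2 → ℝ) :
    successSum W e1 e2 (fun y i1 i2 => f y i1 i2 + g y i1 i2) =
      successSum W e1 e2 f + successSum W e1 e2 g := by
  simp only [successSum, mul_add, sum_add_distrib]

lemma successSum_const_mul (c : ℝ) (f : Y → Fin k1 → Fin k2 → ℝ) :
    successSum W e1 e2 (fun y i1 i2 => c * f y i1 i2) = c * successSum W e1 e2 f := by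
  simp only [successSum, mul_sum, mul_left_comm c]

lemma successSum_one (hW : ∀ x1 x2, ∑ y, W x1 x2 y = 1) (he1 : ∀ i1, ∑ x1, e1 i1 x1 = 1)
    (he2 : ∀ i2, ∑ x2, e2 i2 x2 = 1) :
    successSum W e1 e2 (fun _ _ _ => 1) = k1 * k2 := by
  simp only [successSum, mul_one, ← sum_mul, hW, one_mul, ← mul_sum, he2, mul_one, he1]
  simp

end SuccessSum

section SuccessSets

variable {X1 X2 Y : Type*} [Fintype X1] [Fintype X2] [Fintype Y] {W : X1 → X2 → Y → ℝ}
  {k1 k2 : ℕ} {s t : ℝ}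

variable (W k1 k2) in
def jointSuccessSet : Set ℝ :=
  {s | ∃ (e1 : Fin k1 → X1 → ℝ) (e2 : Fin k2 → X2 → ℝ) (d : Y → Fin k1 → Fin k2 → ℝ),
    (∀ i1 x1, 0 ≤ e1 i1 x1) ∧ (∀ i1, ∑ x1, e1 i1 x1 = 1) ∧
    (∀ i2 x2, 0 ≤ e2 i2 x2) ∧ (∀ i2, ∑ x2, e2 i2 x2 = 1) ∧
    (∀ y j1 j2, 0 ≤ d y j1 j2) ∧ (∀ y, ∑ j1, ∑ j2, d y j1 j2 = 1) ∧
    s = 1 / ((k1 : ℝ) * k2) * successSum W e1 e2 d}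

variable (W k1 k2) in
def sumSuccessSet : Set ℝ :=
  {s | ∃ (e1 : Fin k1 → X1 → ℝ) (e2 : Fin k2 → X2 → ℝ) (d1 : Y → Fin k1 → ℝ)
      (d2 : Y → Fin k2 → ℝ),
    (∀ i1 x1, 0 ≤ e1 i1 x1) ∧ (∀ i1, ∑ x1, e1 i1 x1 = 1) ∧
    (∀ i2 x2, 0 ≤ e2 i2 x2) ∧ (∀ i2, ∑ x2, e2 i2 x2 = 1) ∧
    (∀ y j1, 0 ≤ d1 y j1) ∧ (∀ y, ∑ j1, d1 y j1 = 1) ∧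
    (∀ y j2, 0 ≤ d2 y j2) ∧ (∀ y, ∑ j2, d2 y j2 = 1) ∧
    s = 1 / (2 * (k1 : ℝ) * k2) * successSum W e1 e2 fun y i1 i2 => d1 y i1 + d2 y i2}

lemma S_eq_sSup_jointSuccessSet : S W k1 k2 = sSup (jointSuccessSet W k1 k2) := rfl

lemma Ssum_eq_sSup_sumSuccessSet : Ssum W k1 k2 = sSup (sumSuccessSet W k1 k2) := rfl

lemma nonneg_of_mem_jointSuccessSet (hW : ∀ x1 x2 y, 0 ≤ W x1 x2 y)
    (hs : s ∈ jointSuccessSet W k1 k2) : 0 ≤ s := by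
  obtain ⟨e1, e2, d, he1, -, he2, -, hd, -, rfl⟩ := hs
  have h := successSum_mono hW he1 he2 hd
  rw [successSum_zero] at h
  positivity

lemma nonneg_of_mem_sumSuccessSet (hW : ∀ x1 x2 y, 0 ≤ W x1 x2 y)
    (ht : t ∈ sumSuccessSet W k1 k2) : 0 ≤ t := by
  obtain ⟨e1, e2, d1, d2, he1, -, he2, -, hd1, -, hd2, -, rfl⟩ := ht
  have h := successSum_mono hW he1 he2 fun y i1 i2 => add_nonneg (hd1 y i1) (hd2 y i2)
  rw [successSum_zero] at h
  positivity

lemma le_one_of_mem_sumSuccessSet (hW : IsMAC W) (ht : t ∈ sumSuccessSet W k1 k2) :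
    t ≤ 1 := by
  obtain ⟨e1, e2, d1, d2, he1, he1s, he2, he2s, hd1, hd1s, hd2, hd2s, rfl⟩ := ht
  have hsum : (successSum W e1 e2 fun y i1 i2 => d1 y i1 + d2 y i2) ≤ 2 * (k1 * k2) :=
    calc (successSum W e1 e2 fun y i1 i2 => d1 y i1 + d2 y i2)
        ≤ successSum W e1 e2 fun _ _ _ => 2 * 1 :=
          successSum_mono hW.nonneg he1 he2 fun y i1 i2 => by
            have h1 : d1 y i1 ≤ 1 := stdSimplex.le_one ⟨_, hd1 y, hd1s y⟩ i1
            have h2 : d2 y i2 ≤ 1 := stdSimplex.le_one ⟨_, hd2 y, hd2s y⟩ i2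
            linarith
      _ = 2 * (k1 * k2) := by
          rw [successSum_const_mul 2 fun _ _ _ => 1, successSum_one hW.sum_eq_one he1s he2s]
  calc 1 / (2 * (k1 : ℝ) * k2) * (successSum W e1 e2 fun y i1 i2 => d1 y i1 + d2 y i2)
      ≤ 1 / (2 * (k1 : ℝ) * k2) * (2 * (k1 * k2)) := by gcongr
    _ = (2 * (k1 : ℝ) * k2)⁻¹ * (2 * k1 * k2) := by ring
    _ ≤ 1 := inv_mul_le_one

lemma exists_mem_sumSuccessSet_le (hW : ∀ x1 x2 y, 0 ≤ W x1 x2 y)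
    (hs : s ∈ jointSuccessSet W k1 k2) : ∃ t ∈ sumSuccessSet W k1 k2, s ≤ t := by
  obtain ⟨e1, e2, d, he1, he1s, he2, he2s, hd, hds, rfl⟩ := hs
  let d1 : Y → Fin k1 → ℝ := fun y j1 => ∑ j2, d y j1 j2
  let d2 : Y → Fin k2 → ℝ := fun y j2 => ∑ j1, d y j1 j2
  refine ⟨_, ⟨e1, e2, d1, d2, he1, he1s, he2, he2s,
    fun y j1 => sum_nonneg fun j2 _ => hd y j1 j2, hds,
    fun y j2 => sum_nonneg fun j1 _ => hd y j1 j2, fun y => sum_comm.trans (hds y), rfl⟩, ?_⟩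
  have hmarg : ∀ y i1 i2, 2 * d y i1 i2 ≤ d1 y i1 + d2 y i2 := fun y i1 i2 => by
    rw [two_mul]
    exact add_le_add (single_le_sum (fun j _ => hd y i1 j) (mem_univ i2))
      (single_le_sum (fun j _ => hd y j i2) (mem_univ i1))
  calc 1 / ((k1 : ℝ) * k2) * successSum W e1 e2 d
      = 1 / (2 * (k1 : ℝ) * k2) * successSum W e1 e2 fun y i1 i2 => 2 * d y i1 i2 := by
        rw [successSum_const_mul]; ring
    _ ≤ 1 / (2 * (k1 : ℝ) * k2) * successSum W e1 e2 fun y i1 i2 => d1 y i1 + d2 y i2 := by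
        gcongr
        exact successSum_mono hW he1 he2 hmarg

lemma exists_mem_jointSuccessSet_two_mul_sub_one_le (hW : IsMAC W)
    (ht : t ∈ sumSuccessSet W k1 k2) : ∃ s ∈ jointSuccessSet W k1 k2, 2 * t - 1 ≤ s := by
  obtain ⟨e1, e2, d1, d2, he1, he1s, he2, he2s, hd1, hd1s, hd2, hd2s, rfl⟩ := ht
  refine ⟨_, ⟨e1, e2, fun y j1 j2 => d1 y j1 * d2 y j2, he1, he1s, he2, he2s,
    fun y j1 j2 => mul_nonneg (hd1 y j1) (hd2 y j2),
    fun y => by rw [← Fintype.sum_mul_sum, hd1s, hd2s, one_mul], rfl⟩, ?_⟩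
  have hprod : ∀ y i1 i2, d1 y i1 + d2 y i2 ≤ d1 y i1 * d2 y i2 + 1 := fun y i1 i2 => by
    have h1 : d1 y i1 ≤ 1 := stdSimplex.le_one ⟨_, hd1 y, hd1s y⟩ i1
    have h2 : d2 y i2 ≤ 1 := stdSimplex.le_one ⟨_, hd2 y, hd2s y⟩ i2
    nlinarith
  have hsum : (successSum W e1 e2 fun y i1 i2 => d1 y i1 + d2 y i2)
      ≤ (successSum W e1 e2 fun y i1 i2 => d1 y i1 * d2 y i2) + k1 * k2 := by
    rw [← successSum_one hW.sum_eq_one he1s he2s, ← successSum_add]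
    exact successSum_mono hW.nonneg he1 he2 hprod
  calc 2 * (1 / (2 * (k1 : ℝ) * k2) * successSum W e1 e2 fun y i1 i2 => d1 y i1 + d2 y i2) - 1
      = 1 / ((k1 : ℝ) * k2) * (successSum W e1 e2 fun y i1 i2 => d1 y i1 + d2 y i2) - 1 := by
        ring
    _ ≤ 1 / ((k1 : ℝ) * k2) * ((successSum W e1 e2 fun y i1 i2 => d1 y i1 * d2 y i2)
          + k1 * k2) - 1 := by gcongr
    _ = 1 / ((k1 : ℝ) * k2) * (successSum W e1 e2 fun y i1 i2 => d1 y i1 * d2 y i2)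
          + (((k1 : ℝ) * k2)⁻¹ * (k1 * k2) - 1) := by ring
    _ ≤ 1 / ((k1 : ℝ) * k2) * successSum W e1 e2 fun y i1 i2 => d1 y i1 * d2 y i2 := by
        linarith [inv_mul_le_one (a := (k1 : ℝ) * k2)]

end SuccessSets

section Comparison

variable {X1 X2 Y : Type*} [Fintype X1] [Fintype X2] [Fintype Y] {W : X1 → X2 → Y → ℝ}
  {k1 k2 : ℕ}

lemma S_nonneg (hW : ∀ x1 x2 y, 0 ≤ W x1 x2 y) : 0 ≤ S W k1 k2 :=
  Real.sSup_nonneg fun _ => nonneg_of_mem_jointSuccessSet hW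

lemma Ssum_nonneg (hW : ∀ x1 x2 y, 0 ≤ W x1 x2 y) : 0 ≤ Ssum W k1 k2 :=
  Real.sSup_nonneg fun _ => nonneg_of_mem_sumSuccessSet hW

lemma Ssum_le_one (hW : IsMAC W) : Ssum W k1 k2 ≤ 1 :=
  Real.sSup_le (fun _ => le_one_of_mem_sumSuccessSet hW) zero_le_one

lemma bddAbove_sumSuccessSet (hW : IsMAC W) : BddAbove (sumSuccessSet W k1 k2) :=
  ⟨1, fun _ => le_one_of_mem_sumSuccessSet hW⟩

lemma bddAbove_jointSuccessSet (hW : IsMAC W) : BddAbove (jointSuccessSet W k1 k2) :=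
  ⟨1, fun _ hs =>
    let ⟨_, ht, hst⟩ := exists_mem_sumSuccessSet_le hW.nonneg hs
    hst.trans (le_one_of_mem_sumSuccessSet hW ht)⟩

lemma S_le_Ssum (hW : IsMAC W) : S W k1 k2 ≤ Ssum W k1 k2 := by
  refine Real.sSup_le (fun s hs => ?_) (Ssum_nonneg hW.nonneg)
  obtain ⟨t, ht, hst⟩ := exists_mem_sumSuccessSet_le hW.nonneg hs
  rw [Ssum_eq_sSup_sumSuccessSet]
  exact hst.trans (le_csSup (bddAbove_sumSuccessSet hW) ht)

lemma two_mul_Ssum_sub_one_le_S (hW : IsMAC W) : 2 * Ssum W k1 k2 - 1 ≤ S W k1 k2 := by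
  suffices Ssum W k1 k2 ≤ (S W k1 k2 + 1) / 2 by linarith
  refine Real.sSup_le (fun t ht => ?_) (by linarith [S_nonneg (k1 := k1) (k2 := k2) hW.nonneg])
  obtain ⟨s, hs, hts⟩ := exists_mem_jointSuccessSet_two_mul_sub_one_le hW ht
  have hsS : s ≤ S W k1 k2 := by
    rw [S_eq_sSup_jointSuccessSet]
    exact le_csSup (bddAbove_jointSuccessSet hW) hs
  linarith

end Comparison

lemma tendsto_nhds_one_iff_of_le_of_two_mul_sub_one_le {α : Type*} {l : Filter α}
    {f g : α → ℝ} (hfg : ∀ a, f a ≤ g a) (hg : ∀ a, g a ≤ 1) (hgf : ∀ a, 2 * g a - 1 ≤ f a) :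
    Tendsto f l (𝓝 1) ↔ Tendsto g l (𝓝 1) := by
  refine ⟨fun hf => tendsto_of_tendsto_of_tendsto_of_le_of_le hf tendsto_const_nhds hfg hg,
    fun hg' => tendsto_of_tendsto_of_tendsto_of_le_of_le ?_ hg' hgf hfg⟩
  convert (hg'.const_mul 2).sub_const 1 using 2
  norm_num

theorem capacityRegion_eq_sumCapacityRegion {X1 X2 Y : Type*}
    [Fintype X1] [Fintype X2] [Fintype Y]
    (W : X1 → X2 → Y → ℝ)
    (hW0 : ∀ x1 x2 y, 0 ≤ W x1 x2 y)
    (hW1 : ∀ x1 x2, ∑ y, W x1 x2 y = 1) :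
    capacityRegion W = sumCapacityRegion W := by
  have hW : IsMAC W := ⟨hW0, hW1⟩
  refine congrArg closure (Set.ext fun p => ?_)
  exact tendsto_nhds_one_iff_of_le_of_two_mul_sub_one_le (fun n => S_le_Ssum (hW.macPow n))
    (fun n => Ssum_le_one (hW.macPow n)) (fun n => two_mul_Ssum_sub_one_le_S (hW.macPow n))
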